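/- The 9×9 matrix R of the Jordan deformation of GL(3) given by (in the basis e_i⊗e_j, with q_{ij}=−q_{ji}, p_{ij}=−p_{ji} free parameters): R(e₁⊗e₁)=e₁⊗e₁ + q₁₃e₁⊗e₃ + q₂₃e₂⊗e₃ + q₃₁e₃⊗e₁ + q₃₂e₃⊗e₂ + p₁₃q₃₁e₃⊗e₃, R(e₁⊗e₂)=e₂⊗e₁ + p₁₂e₃⊗e₃, R(e₁⊗e₃)=e₃⊗e₁ + p₁₃e₃⊗e₃, R(e₂⊗e₁)=e₁⊗e₂ + p₂₁e₃⊗e₃, R(e₂⊗e₂)=e₂⊗e₂, R(e₂⊗e₃)=e₃⊗e₂, R(e₃⊗e₁)=e₁⊗e₃ + p₃₁e₃⊗e₃, R(e₃⊗e₂)=e₂⊗e₃, R(e₃⊗e₃)=e₃⊗e₃, satisfies R² = 1 and the braid equation R₁₂R₂₃R₁₂ = R₂₃R₁₂R₂₃. -/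

import Mathlib

/-!
Both identities are equalities of linear maps, so it suffices to compare the two sides on basis
tensors: the 9 vectors `e i ⊗ e j` for `R² = 1` and the 27 vectors `e a ⊗ e b ⊗ e c` for the
braid relation. On each of them, expanding with the defining table of `R` leaves an identity
between polynomials in `q₁₃, q₂₃, p₁₂, p₁₃`.
-/

open TensorProduct

variable {k : Type*} [Field k]

/-- The standard basis vectors of `k³`. -/
noncomputable def e (i : Fin 3) : Fin 3 → k := Pi.basisFun k (Fin 3) i

/-- The basis `e_i ⊗ e_j` of `k³ ⊗ k³`. -/
noncomputable def bb : Module.Basis (Fin 3 × Fin 3) k ((Fin 3 → k) ⊗[k] (Fin 3 → k)) :=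
  (Pi.basisFun k (Fin 3)).tensorProduct (Pi.basisFun k (Fin 3))

/-- The R-matrix of the Jordan deformation of GL(3), defined by its action on
the basis `e_i ⊗ e_j` (indices `0,1,2` standing for `1,2,3`), with
`q₃₁ = -q₁₃`, `q₃₂ = -q₂₃`, `p₂₁ = -p₁₂`, `p₃₁ = -p₁₃`. -/
noncomputable def Rjordan (q₁₃ q₂₃ p₁₂ p₁₃ : k) :
    Module.End k ((Fin 3 → k) ⊗[k] (Fin 3 → k)) :=
  (bb.constr k) fun p : Fin 3 × Fin 3 =>
    match p with
    | (0, 0) => e 0 ⊗ₜ[k] e 0 + q₁₃ • e 0 ⊗ₜ[k] e 2 + q₂₃ • e 1 ⊗ₜ[k] e 2 +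
        (-q₁₃) • e 2 ⊗ₜ[k] e 0 + (-q₂₃) • e 2 ⊗ₜ[k] e 1 + (p₁₃ * (-q₁₃)) • e 2 ⊗ₜ[k] e 2
    | (0, 1) => e 1 ⊗ₜ[k] e 0 + p₁₂ • e 2 ⊗ₜ[k] e 2
    | (0, 2) => e 2 ⊗ₜ[k] e 0 + p₁₃ • e 2 ⊗ₜ[k] e 2
    | (1, 0) => e 0 ⊗ₜ[k] e 1 + (-p₁₂) • e 2 ⊗ₜ[k] e 2
    | (1, 1) => e 1 ⊗ₜ[k] e 1
    | (1, 2) => e 2 ⊗ₜ[k] e 1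
    | (2, 0) => e 0 ⊗ₜ[k] e 2 + (-p₁₃) • e 2 ⊗ₜ[k] e 2
    | (2, 1) => e 1 ⊗ₜ[k] e 2
    | (2, 2) => e 2 ⊗ₜ[k] e 2

/-- The operator `R ⊗ id` acting on the triple tensor power. -/
noncomputable def R₁₂ (R : Module.End k ((Fin 3 → k) ⊗[k] (Fin 3 → k))) :
    Module.End k ((Fin 3 → k) ⊗[k] ((Fin 3 → k) ⊗[k] (Fin 3 → k))) :=
  (TensorProduct.assoc k _ _ _).toLinearMap ∘ₗ
    TensorProduct.map R LinearMap.id ∘ₗ (TensorProduct.assoc k _ _ _).symm.toLinearMap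

/-- The operator `id ⊗ R` acting on the triple tensor power. -/
noncomputable def R₂₃ (R : Module.End k ((Fin 3 → k) ⊗[k] (Fin 3 → k))) :
    Module.End k ((Fin 3 → k) ⊗[k] ((Fin 3 → k) ⊗[k] (Fin 3 → k))) :=
  TensorProduct.map LinearMap.id R

lemma e_tmul_e (i j : Fin 3) : (e i ⊗ₜ[k] e j : (Fin 3 → k) ⊗[k] (Fin 3 → k)) = bb (i, j) := by
  simp [bb, Module.Basis.tensorProduct_apply, e]

lemma e_tmul_e_tmul_e (a b c : Fin 3) :
    (e a ⊗ₜ[k] (e b ⊗ₜ[k] e c) : (Fin 3 → k) ⊗[k] ((Fin 3 → k) ⊗[k] (Fin 3 → k))) =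
      (Pi.basisFun k (Fin 3)).tensorProduct bb (a, b, c) := by
  simp [Module.Basis.tensorProduct_apply, e, ← e_tmul_e]

lemma R₁₂_tmul_tmul (R : Module.End k ((Fin 3 → k) ⊗[k] (Fin 3 → k))) (x y z : Fin 3 → k) :
    R₁₂ R (x ⊗ₜ[k] (y ⊗ₜ[k] z)) = TensorProduct.assoc k _ _ _ (R (x ⊗ₜ[k] y) ⊗ₜ[k] z) := by
  simp [R₁₂]

lemma R₂₃_tmul_tmul (R : Module.End k ((Fin 3 → k) ⊗[k] (Fin 3 → k))) (x y z : Fin 3 → k) :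
    R₂₃ R (x ⊗ₜ[k] (y ⊗ₜ[k] z)) = x ⊗ₜ[k] R (y ⊗ₜ[k] z) :=
  TensorProduct.map_tmul _ _ _ _

section Rjordan

variable (q₁₃ q₂₃ p₁₂ p₁₃ : k)

lemma Rjordan_e0_e0 : Rjordan q₁₃ q₂₃ p₁₂ p₁₃ (e 0 ⊗ₜ[k] e 0) =
    e 0 ⊗ₜ[k] e 0 + q₁₃ • e 0 ⊗ₜ[k] e 2 + q₂₃ • e 1 ⊗ₜ[k] e 2 +
        (-q₁₃) • e 2 ⊗ₜ[k] e 0 + (-q₂₃) • e 2 ⊗ₜ[k] e 1 + (p₁₃ * (-q₁₃)) • e 2 ⊗ₜ[k] e 2 := by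
  conv_lhs => rw [e_tmul_e, Rjordan, Module.Basis.constr_basis]

lemma Rjordan_e0_e1 :
    Rjordan q₁₃ q₂₃ p₁₂ p₁₃ (e 0 ⊗ₜ[k] e 1) = e 1 ⊗ₜ[k] e 0 + p₁₂ • e 2 ⊗ₜ[k] e 2 := by
  conv_lhs => rw [e_tmul_e, Rjordan, Module.Basis.constr_basis]

lemma Rjordan_e0_e2 :
    Rjordan q₁₃ q₂₃ p₁₂ p₁₃ (e 0 ⊗ₜ[k] e 2) = e 2 ⊗ₜ[k] e 0 + p₁₃ • e 2 ⊗ₜ[k] e 2 := by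
  conv_lhs => rw [e_tmul_e, Rjordan, Module.Basis.constr_basis]

lemma Rjordan_e1_e0 :
    Rjordan q₁₃ q₂₃ p₁₂ p₁₃ (e 1 ⊗ₜ[k] e 0) = e 0 ⊗ₜ[k] e 1 + (-p₁₂) • e 2 ⊗ₜ[k] e 2 := by
  conv_lhs => rw [e_tmul_e, Rjordan, Module.Basis.constr_basis]

lemma Rjordan_e1_e1 : Rjordan q₁₃ q₂₃ p₁₂ p₁₃ (e 1 ⊗ₜ[k] e 1) = e 1 ⊗ₜ[k] e 1 := by
  conv_lhs => rw [e_tmul_e, Rjordan, Module.Basis.constr_basis]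

lemma Rjordan_e1_e2 : Rjordan q₁₃ q₂₃ p₁₂ p₁₃ (e 1 ⊗ₜ[k] e 2) = e 2 ⊗ₜ[k] e 1 := by
  conv_lhs => rw [e_tmul_e, Rjordan, Module.Basis.constr_basis]

lemma Rjordan_e2_e0 :
    Rjordan q₁₃ q₂₃ p₁₂ p₁₃ (e 2 ⊗ₜ[k] e 0) = e 0 ⊗ₜ[k] e 2 + (-p₁₃) • e 2 ⊗ₜ[k] e 2 := by
  conv_lhs => rw [e_tmul_e, Rjordan, Module.Basis.constr_basis]

lemma Rjordan_e2_e1 : Rjordan q₁₃ q₂₃ p₁₂ p₁₃ (e 2 ⊗ₜ[k] e 1) = e 1 ⊗ₜ[k] e 2 := by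
  conv_lhs => rw [e_tmul_e, Rjordan, Module.Basis.constr_basis]

lemma Rjordan_e2_e2 : Rjordan q₁₃ q₂₃ p₁₂ p₁₃ (e 2 ⊗ₜ[k] e 2) = e 2 ⊗ₜ[k] e 2 := by
  conv_lhs => rw [e_tmul_e, Rjordan, Module.Basis.constr_basis]

lemma Rjordan_mul_self : Rjordan q₁₃ q₂₃ p₁₂ p₁₃ * Rjordan q₁₃ q₂₃ p₁₂ p₁₃ = 1 := by
  refine bb.ext fun ⟨i, j⟩ => ?_
  rw [← e_tmul_e]
  fin_cases i <;> fin_cases j <;>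
    simp only [Fin.reduceFinMk, Module.End.mul_apply, Module.End.one_apply, Rjordan_e0_e0,
      Rjordan_e0_e1, Rjordan_e0_e2, Rjordan_e1_e0, Rjordan_e1_e1, Rjordan_e1_e2, Rjordan_e2_e0,
      Rjordan_e2_e1, Rjordan_e2_e2, map_add, map_smul] <;>
    module

lemma Rjordan_braid :
    R₁₂ (Rjordan q₁₃ q₂₃ p₁₂ p₁₃) * R₂₃ (Rjordan q₁₃ q₂₃ p₁₂ p₁₃) *
        R₁₂ (Rjordan q₁₃ q₂₃ p₁₂ p₁₃) =
      R₂₃ (Rjordan q₁₃ q₂₃ p₁₂ p₁₃) * R₁₂ (Rjordan q₁₃ q₂₃ p₁₂ p₁₃) *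
        R₂₃ (Rjordan q₁₃ q₂₃ p₁₂ p₁₃) := by
  refine ((Pi.basisFun k (Fin 3)).tensorProduct bb).ext fun ⟨a, b, c⟩ => ?_
  rw [← e_tmul_e_tmul_e]
  fin_cases a <;> fin_cases b <;> fin_cases c <;>
    simp only [Fin.reduceFinMk, Module.End.mul_apply, R₁₂_tmul_tmul, R₂₃_tmul_tmul,
      Rjordan_e0_e0, Rjordan_e0_e1, Rjordan_e0_e2, Rjordan_e1_e0, Rjordan_e1_e1, Rjordan_e1_e2,
      Rjordan_e2_e0, Rjordan_e2_e1, Rjordan_e2_e2, map_add, map_smul, tmul_add, tmul_smul,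
      add_tmul, ← smul_tmul', assoc_tmul] <;>
    module

end Rjordan

theorem stmt_16 (q₁₃ q₂₃ p₁₂ p₁₃ : k) :
    Rjordan q₁₃ q₂₃ p₁₂ p₁₃ * Rjordan q₁₃ q₂₃ p₁₂ p₁₃ = 1 ∧
      R₁₂ (Rjordan q₁₃ q₂₃ p₁₂ p₁₃) * R₂₃ (Rjordan q₁₃ q₂₃ p₁₂ p₁₃) *
          R₁₂ (Rjordan q₁₃ q₂₃ p₁₂ p₁₃) =
        R₂₃ (Rjordan q₁₃ q₂₃ p₁₂ p₁₃) * R₁₂ (Rjordan q₁₃ q₂₃ p₁₂ p₁₃) *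
          R₂₃ (Rjordan q₁₃ q₂₃ p₁₂ p₁₃) :=
  ⟨Rjordan_mul_self q₁₃ q₂₃ p₁₂ p₁₃, Rjordan_braid q₁₃ q₂₃ p₁₂ p₁₃⟩
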